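/- Let X be a real normed space admitting a differentiable blid map (a bounded, Fréchet differentiable H : X → X equal to the identity near 0). Then for every normed space Y, every function f : X → Y that is Fréchet differentiable on an open neighborhood U of 0 admits a function F : X → Y that is Fréchet differentiable on all of X and agrees with f on some neighborhood of 0. -/

import Mathlib

/-!
Rescaling a blid map `H` by `r > 0` to `x ↦ r • H (r⁻¹ • x)` keeps it differentiable and equal to
the identity near `0`, while its range shrinks into the ball of radius `r * sup ‖H‖`. Choosing `r`
so that this ball lies in `U`, the composite `f ∘ (r • H (r⁻¹ • ·))` is differentiable everywhere
and agrees with `f` near `0`.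
-/

open Filter Topology Metric

section Blid

variable {E : Type*} [NormedAddCommGroup E] [NormedSpace ℝ E] {H : E → E}

theorem eventually_smul_comp_inv_smul_eq_self (hid : ∀ᶠ x in 𝓝 0, H x = x) {r : ℝ} (hr : r ≠ 0) :
    ∀ᶠ x in 𝓝 (0 : E), r • H (r⁻¹ • x) = x := by
  have hscale : Tendsto (fun x : E => r⁻¹ • x) (𝓝 0) (𝓝 0) :=
    (continuous_const_smul r⁻¹).tendsto' 0 0 (smul_zero _)
  filter_upwards [hscale.eventually hid] with x hx
  rw [hx, smul_inv_smul₀ hr]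

theorem exists_differentiable_eventually_eq_self_forall_mem_ball (hH : Differentiable ℝ H)
    (hid : ∀ᶠ x in 𝓝 0, H x = x) (hbd : ∃ N : ℝ, ∀ x, ‖H x‖ ≤ N) {δ : ℝ} (hδ : 0 < δ) :
    ∃ G : E → E, Differentiable ℝ G ∧ (∀ᶠ x in 𝓝 0, G x = x) ∧ ∀ x, G x ∈ ball 0 δ := by
  obtain ⟨N, hN⟩ := hbd
  have hN0 : 0 ≤ N := (norm_nonneg _).trans (hN 0)
  set r := δ / (N + 1)
  have hr : 0 < r := by positivity
  refine ⟨fun x => r • H (r⁻¹ • x), (hH.comp (differentiable_id.const_smul r⁻¹)).const_smul r,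
    eventually_smul_comp_inv_smul_eq_self hid hr.ne', fun x => ?_⟩
  rw [mem_ball_zero_iff, norm_smul, Real.norm_of_nonneg hr.le]
  calc r * ‖H (r⁻¹ • x)‖ ≤ r * N := by gcongr; exact hN _
    _ < r * (N + 1) := by gcongr; linarith
    _ = δ := div_mul_cancel₀ δ (by positivity)

end Blid

theorem stmt_3 {X : Type*} [NormedAddCommGroup X] [NormedSpace ℝ X]
    (H : X → X) (hH : Differentiable ℝ H)
    (hid : ∀ᶠ x in nhds (0 : X), H x = x)
    (hbd : ∃ N : ℝ, ∀ x, ‖H x‖ ≤ N)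
    {Y : Type*} [NormedAddCommGroup Y] [NormedSpace ℝ Y]
    (f : X → Y) (U : Set X) (hU : IsOpen U) (hU0 : (0 : X) ∈ U)
    (hf : ∀ x ∈ U, DifferentiableAt ℝ f x) :
    ∃ F : X → Y, Differentiable ℝ F ∧ ∀ᶠ x in nhds (0 : X), F x = f x := by
  obtain ⟨δ, hδ, hballU⟩ := isOpen_iff.mp hU 0 hU0
  obtain ⟨G, hGdiff, hGid, hGball⟩ :=
    exists_differentiable_eventually_eq_self_forall_mem_ball hH hid hbd hδ
  refine ⟨f ∘ G, fun x => (hf (G x) (hballU (hGball x))).comp x (hGdiff x), ?_⟩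
  filter_upwards [hGid] with x hx
  rw [Function.comp_apply, hx]
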